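/- The FastMap heuristic h^i(x,g) = Σ_{j=1}^{i} |pⱼ(x) - pⱼ(g)| is consistent: for all nodes x, y, g and every i, h^i(x,g) ≤ d¹(x,y) + h^i(y,g), and h^i(g,g) = 0, where d¹ is the original shortest-path distance in the graph. -/

import Mathlib

/-- The total weight of a walk in a graph, under edge weights `w`. -/
noncomputable def walkWeight {V : Type*} {G : SimpleGraph V} (w : V → V → ℝ)
    {x y : V} (p : G.Walk x y) : ℝ :=
  (p.darts.map (fun d => w d.toProd.1 d.toProd.2)).sum

/-- Shortest-path distance between `x` and `y` in `G` under edge weights `w`. -/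
noncomputable def spDist {V : Type*} (G : SimpleGraph V) (w : V → V → ℝ)
    (x y : V) : ℝ :=
  sInf {c : ℝ | ∃ p : G.Walk x y, walkWeight w p = c}

/-!
Every FastMap coordinate `pⱼ` is the average of two functions that are `1`-Lipschitz for the
current distance `dʲ`, so across an edge it changes by at most the current edge weight `wʲ`.
Hence the updated weights stay nonnegative, and they telescope: on an edge `(u, v)`,
`∑_{j<i} |pⱼ u - pⱼ v| = w¹ u v - wⁱ u v ≤ w¹ u v`. By the triangle inequality for `|·|`, the
heuristic `hⁱ(·, g)` therefore changes by at most `w¹` across an edge, hence by at most the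
weight of any walk, hence by at most `d¹`.
-/

open SimpleGraph Finset

section ShortestPath

variable {V : Type*} {G : SimpleGraph V} (wt : V → V → ℝ)

@[simp]
theorem walkWeight_nil {x : V} : walkWeight wt (Walk.nil : G.Walk x x) = 0 := by
  simp [walkWeight]

@[simp]
theorem walkWeight_cons {x y z : V} (h : G.Adj x y) (q : G.Walk y z) :
    walkWeight wt (Walk.cons h q) = wt x y + walkWeight wt q := by
  simp [walkWeight]

theorem walkWeight_append {x y z : V} (q : G.Walk x y) (r : G.Walk y z) :
    walkWeight wt (q.append r) = walkWeight wt q + walkWeight wt r := by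
  simp [walkWeight, Walk.darts_append]

theorem walkWeight_reverse (hs : ∀ u v, wt u v = wt v u) {x y : V} (q : G.Walk x y) :
    walkWeight wt q.reverse = walkWeight wt q := by
  induction q with
  | nil => simp
  | cons h q ih =>
    rw [Walk.reverse_cons, walkWeight_append, walkWeight_cons, ih, walkWeight_cons,
      walkWeight_nil, hs]
    ring

theorem spDist_comm (hs : ∀ u v, wt u v = wt v u) (x y : V) :
    spDist G wt x y = spDist G wt y x := by
  unfold spDist
  congr 1
  ext c
  constructor <;> rintro ⟨q, rfl⟩ <;> exact ⟨q.reverse, walkWeight_reverse wt hs q⟩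

theorem walkWeight_nonneg (hnn : ∀ u v, G.Adj u v → 0 ≤ wt u v) {x y : V} (q : G.Walk x y) :
    0 ≤ walkWeight wt q := by
  induction q with
  | nil => simp
  | cons h q ih => rw [walkWeight_cons]; exact add_nonneg (hnn _ _ h) ih

theorem spDist_le_walkWeight (hnn : ∀ u v, G.Adj u v → 0 ≤ wt u v) {x y : V} (q : G.Walk x y) :
    spDist G wt x y ≤ walkWeight wt q :=
  csInf_le ⟨0, by rintro c ⟨q', rfl⟩; exact walkWeight_nonneg wt hnn q'⟩ ⟨q, rfl⟩

theorem le_spDist {x y : V} (hxy : G.Reachable x y) {c : ℝ}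
    (hc : ∀ q : G.Walk x y, c ≤ walkWeight wt q) : c ≤ spDist G wt x y := by
  obtain ⟨q⟩ := hxy
  exact le_csInf ⟨_, q, rfl⟩ (by rintro _ ⟨q', rfl⟩; exact hc q')

theorem spDist_le_add_of_adj (hnn : ∀ u v, G.Adj u v → 0 ≤ wt u v) {x y b : V}
    (hxy : G.Adj x y) (hyb : G.Reachable y b) :
    spDist G wt x b ≤ wt x y + spDist G wt y b := by
  have : spDist G wt x b - wt x y ≤ spDist G wt y b := by
    refine le_spDist wt hyb fun q => ?_
    have := spDist_le_walkWeight wt hnn (Walk.cons hxy q)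
    rw [walkWeight_cons] at this
    linarith
  linarith

theorem abs_spDist_sub_spDist_le_of_adj (hnn : ∀ u v, G.Adj u v → 0 ≤ wt u v)
    (hs : ∀ u v, wt u v = wt v u) {x y b : V} (hxy : G.Adj x y) (hxb : G.Reachable x b) :
    |spDist G wt x b - spDist G wt y b| ≤ wt x y := by
  have hyb : G.Reachable y b := hxy.symm.reachable.trans hxb
  have hx := spDist_le_add_of_adj wt hnn hxy hyb
  have hy := spDist_le_add_of_adj wt hnn hxy.symm hxb
  rw [hs y x] at hy
  exact abs_sub_le_iff.mpr ⟨by linarith, by linarith⟩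

theorem sub_le_spDist_of_forall_adj {f : V → ℝ} (hf : ∀ u v, G.Adj u v → f u - f v ≤ wt u v)
    {x y : V} (hxy : G.Reachable x y) : f x - f y ≤ spDist G wt x y := by
  refine le_spDist wt hxy fun q => ?_
  clear hxy
  induction q with
  | nil => simp
  | cons huv q ih => rw [walkWeight_cons]; linarith [hf _ _ huv]

end ShortestPath

section FastMap

variable {V : Type*} {G : SimpleGraph V}

noncomputable def fastmapCoord (G : SimpleGraph V) (wt : V → V → ℝ) (a b v : V) : ℝ :=
  (spDist G wt a v + spDist G wt a b - spDist G wt v b) / 2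

theorem abs_fastmapCoord_sub_le_of_adj {wt : V → V → ℝ} (hnn : ∀ u v, G.Adj u v → 0 ≤ wt u v)
    (hs : ∀ u v, wt u v = wt v u) (hG : G.Preconnected) {x y : V} (hxy : G.Adj x y) (a b : V) :
    |fastmapCoord G wt a b x - fastmapCoord G wt a b y| ≤ wt x y := by
  have ha := abs_spDist_sub_spDist_le_of_adj wt hnn hs hxy (hG x a)
  have hb := abs_spDist_sub_spDist_le_of_adj wt hnn hs hxy (hG x b)
  rw [spDist_comm wt hs x a, spDist_comm wt hs y a] at ha
  rw [fastmapCoord, fastmapCoord, abs_le]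
  constructor <;> linarith [abs_le.mp ha, abs_le.mp hb]

variable {W : ℕ → V → V → ℝ} {A B : ℕ → V} {p : ℕ → V → ℝ}

theorem fastmap_weight_nonneg (hG : G.Preconnected) (hW0 : ∀ u v, G.Adj u v → 0 ≤ W 0 u v)
    (hWsymm : ∀ i u v, W i u v = W i v u)
    (hp : ∀ i v, p i v = fastmapCoord G (W i) (A i) (B i) v)
    (hWsucc : ∀ i u v, G.Adj u v → W (i + 1) u v = W i u v - |p i u - p i v|) (i : ℕ) :
    ∀ u v, G.Adj u v → 0 ≤ W i u v := by
  induction i with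
  | zero => exact hW0
  | succ i ih =>
    intro u v huv
    have := abs_fastmapCoord_sub_le_of_adj ih (hWsymm i) hG huv (A i) (B i)
    rw [hWsucc i u v huv, hp, hp]
    linarith

theorem fastmap_sum_abs_sub_le (hG : G.Preconnected) (hW0 : ∀ u v, G.Adj u v → 0 ≤ W 0 u v)
    (hWsymm : ∀ i u v, W i u v = W i v u)
    (hp : ∀ i v, p i v = fastmapCoord G (W i) (A i) (B i) v)
    (hWsucc : ∀ i u v, G.Adj u v → W (i + 1) u v = W i u v - |p i u - p i v|) (i : ℕ)
    {u v : V} (huv : G.Adj u v) :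
    ∑ j ∈ range i, |p j u - p j v| ≤ W 0 u v := by
  have telescope : ∑ j ∈ range i, |p j u - p j v| = W 0 u v - W i u v := by
    induction i with
    | zero => simp
    | succ i ih => rw [sum_range_succ, ih, hWsucc i u v huv]; ring
  have := fastmap_weight_nonneg hG hW0 hWsymm hp hWsucc i u v huv
  linarith

end FastMap

theorem Finset.sum_abs_sub_le_sum_abs_sub_add {ι : Type*} (s : Finset ι) (a b c : ι → ℝ) :
    ∑ j ∈ s, |a j - c j| ≤ ∑ j ∈ s, |a j - b j| + ∑ j ∈ s, |b j - c j| := by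
  rw [← sum_add_distrib]
  exact sum_le_sum fun j _ => abs_sub_le _ _ _

/- Iterations are 0-indexed: `W i`, `p i`, `A i`, `B i` are the paper's `w^{i+1}`, `p_{i+1}`,
`a_{i+1}`, `b_{i+1}`. -/
open Finset in
theorem fastmap_consistent_general {V : Type*} (G : SimpleGraph V) (hconn : G.Connected) (w : V → V → ℝ)
    (hnonneg : ∀ u v, G.Adj u v → 0 ≤ w u v)
    (W : ℕ → V → V → ℝ) (hW0 : W 0 = w)
    (A B : ℕ → V) (p : ℕ → V → ℝ)
    (hp : ∀ i v, p i v = (spDist G (W i) (A i) v + spDist G (W i) (A i) (B i)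
        - spDist G (W i) v (B i)) / 2)
    (hWsymm : ∀ i u v, W i u v = W i v u)
    (hWsucc : ∀ i u v, G.Adj u v → W (i + 1) u v = W i u v - |p i u - p i v|)
    (h : ℕ → V → V → ℝ)
    (hh : ∀ i x y, h i x y = ∑ j ∈ Finset.range i, |p j x - p j y|) :
    (∀ i (x y g : V), h i x g ≤ spDist G (W 0) x y + h i y g) ∧
    (∀ i (g : V), h i g g = 0) := by
  have hG := hconn.preconnected
  have hedge : ∀ i g u v, G.Adj u v → h i u g - h i v g ≤ W 0 u v := by
    intro i g u v huv
    rw [hh, hh]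
    have := sum_abs_sub_le_sum_abs_sub_add (range i) (p · u) (p · v) (p · g)
    have := fastmap_sum_abs_sub_le hG (hW0 ▸ hnonneg) hWsymm hp hWsucc i huv
    linarith
  refine ⟨fun i x y g => ?_, fun i g => by simp [hh]⟩
  have := sub_le_spDist_of_forall_adj (W 0) (f := (h i · g)) (hedge i g) (hG x y)
  linarith

open Finset in
/-- Theorem 1 of the FastMap paper: the FastMap heuristic
`h^i(x,g) = ∑_{j<i} |pⱼ(x) - pⱼ(g)|` is consistent:
`h^i(x,g) ≤ d¹(x,y) + h^i(y,g)` and `h^i(g,g) = 0`. -/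
theorem fastmap_consistent {V : Type*} [Fintype V] (G : SimpleGraph V) (hconn : G.Connected) (w : V → V → ℝ)
    (hsymm : ∀ u v, w u v = w v u)
    (hnonneg : ∀ u v, G.Adj u v → 0 ≤ w u v)
    (W : ℕ → V → V → ℝ) (hW0 : W 0 = w)
    (A B : ℕ → V) (p : ℕ → V → ℝ)
    (hp : ∀ i v, p i v = (spDist G (W i) (A i) v + spDist G (W i) (A i) (B i)
        - spDist G (W i) v (B i)) / 2)
    (hWsymm : ∀ i u v, W i u v = W i v u)
    (hWsucc : ∀ i u v, G.Adj u v → W (i + 1) u v = W i u v - |p i u - p i v|)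
    (h : ℕ → V → V → ℝ)
    (hh : ∀ i x y, h i x y = ∑ j ∈ Finset.range i, |p j x - p j y|) :
    (∀ i (x y g : V), h i x g ≤ spDist G (W 0) x y + h i y g) ∧
    (∀ i (g : V), h i g g = 0) :=
  fastmap_consistent_general G hconn w hnonneg W hW0 A B p hp hWsymm hWsucc h hh
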